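/- arXiv:2006.09749 — 3 statements merged into one kernel-verified Lean document; each statement's English description precedes it below -/
import Mathlib

section
/- Let y_κ solve y' = −(1/(1−2m(r)/r))·(m(r)/r² + 4π r p(r)) with y(0)=κ > 0, where m(r) = 4π∫₀^r s² g(y(s)) ds and p = P(g(y)), g nonnegative and nondecreasing, vanishing on (−∞,0]. If y_κ(R) = 0 at some R > 0 and 2m(r)/r < 1 for all r, then y_κ is strictly decreasing on the interval where m > 0, and y_κ(r) < 0 for all r > R; in particular g(y_κ(r)) = 0 for r ≥ R, so the star has compact support of radius R. -/
open MeasureTheory intervalIntegral Set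

/-- TOV monotonicity and compact support: if y solves the TOV equation with y(R)=0 and
2m/r < 1, then y is strictly decreasing where m > 0, y < 0 beyond R, and the density
g(y) vanishes for r ≥ R. -/
theorem stmt_5 (y m p g P : ℝ → ℝ) (κ R : ℝ) (hκ : 0 < κ) (hR : 0 < R)
    (hg0 : ∀ s ≤ (0:ℝ), g s = 0)
    (hgpos : ∀ s > (0:ℝ), 0 < g s)
    (hgmono : Monotone g)
    (hp : ∀ r, p r = P (g (y r))) (hppos : ∀ r, 0 ≤ p r)
    (hm : ∀ r, m r = 4 * Real.pi * ∫ s in (0:ℝ)..r, s ^ 2 * g (y s))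
    (hy0 : y 0 = κ)
    (hhorizon : ∀ r > (0:ℝ), 2 * m r / r < 1)
    (hode : ∀ r > (0:ℝ), HasDerivAt y
      (-(1 - 2 * m r / r)⁻¹ * (m r / r ^ 2 + 4 * Real.pi * r * p r)) r)
    (hycont : Continuous y)
    (hyR : y R = 0) :
    (∀ r₁ r₂, 0 < r₁ → r₁ < r₂ → 0 < m r₁ → y r₂ < y r₁) ∧
      (∀ r > R, y r < 0) ∧ (∀ r ≥ R, g (y r) = 0) := by
  have hgnn : ∀ t, 0 ≤ g t := by
    intro t
    rcases le_or_gt t 0 with h | h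
    · exact (hg0 t h).ge
    · exact (hgpos t h).le
  have hmeasg : Measurable fun s => s ^ 2 * g (y s) :=
    (measurable_id.pow_const 2).mul (hgmono.measurable.comp hycont.measurable)
  have hint : ∀ a b : ℝ, IntervalIntegrable (fun s => s ^ 2 * g (y s)) volume a b := by
    intro a b
    obtain ⟨x₀, _, hM⟩ := (isCompact_uIcc (a := a) (b := b)).exists_isMaxOn nonempty_uIcc
      hycont.continuousOn
    set M := y x₀ with hMdef
    have hbd : IntervalIntegrable (fun s => s ^ 2 * g M) volume a b :=
      (Continuous.mul (by continuity) continuous_const).intervalIntegrable a b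
    refine hbd.mono_fun hmeasg.aestronglyMeasurable ?_
    filter_upwards [ae_restrict_mem measurableSet_uIoc] with s hs
    have hs' : s ∈ Set.uIcc a b := Set.uIoc_subset_uIcc hs
    have h1 : g (y s) ≤ g M := hgmono (hM hs')
    rw [Real.norm_eq_abs, Real.norm_eq_abs, abs_of_nonneg (mul_nonneg (sq_nonneg s) (hgnn _)),
      abs_of_nonneg (mul_nonneg (sq_nonneg s) (hgnn _))]
    exact mul_le_mul_of_nonneg_left h1 (sq_nonneg s)
  have hmono : ∀ a b : ℝ, 0 ≤ a → a ≤ b → m a ≤ m b := by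
    intro a b _ hab
    rw [hm a, hm b, ← intervalIntegral.integral_add_adjacent_intervals (hint 0 a) (hint a b)]
    have hnn : 0 ≤ ∫ s in a..b, s ^ 2 * g (y s) :=
      intervalIntegral.integral_nonneg hab fun u _ => mul_nonneg (sq_nonneg u) (hgnn _)
    nlinarith [Real.pi_pos]
  have key : ∀ r₁ r₂, 0 < r₁ → r₁ < r₂ → 0 < m r₁ → y r₂ < y r₁ := by
    intro r₁ r₂ h1 h12 hm1
    have hanti : StrictAntiOn y (Set.Icc r₁ r₂) := by
      apply strictAntiOn_of_deriv_neg (convex_Icc _ _) hycont.continuousOn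
      intro x hx
      rw [interior_Icc] at hx
      have hx0 : 0 < x := h1.trans hx.1
      rw [(hode x hx0).deriv]
      have hmx : 0 < m x := lt_of_lt_of_le hm1 (hmono r₁ x h1.le hx.1.le)
      have h1x : 0 < 1 - 2 * m x / x := by linarith [hhorizon x hx0]
      have hterm : 0 < m x / x ^ 2 + 4 * Real.pi * x * p x :=
        add_pos_of_pos_of_nonneg (div_pos hmx (pow_pos hx0 2))
          (mul_nonneg (by positivity) (hppos x))
      have hpos : 0 < (1 - 2 * m x / x)⁻¹ * (m x / x ^ 2 + 4 * Real.pi * x * p x) :=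
        mul_pos (inv_pos.2 h1x) hterm
      rw [neg_mul]
      linarith
    exact hanti ⟨le_refl r₁, h12.le⟩ ⟨h12.le, le_refl r₂⟩ h12
  -- m R > 0
  have hmR : 0 < m R := by
    have hopen : {x : ℝ | 0 < y x} ∈ nhds (0 : ℝ) :=
      (isOpen_lt continuous_const hycont).mem_nhds (by simp [hy0, hκ])
    obtain ⟨ε, hε, hball⟩ := Metric.mem_nhds_iff.1 hopen
    set δ := min (ε / 2) R with hδdef
    have hδ0 : 0 < δ := lt_min (by linarith) hR
    have hδR : δ ≤ R := min_le_right _ _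
    have hypos : ∀ s ∈ Set.Ioo (0:ℝ) δ, 0 < y s := by
      intro s hs
      apply hball
      rw [Metric.mem_ball, Real.dist_eq, sub_zero, abs_of_pos hs.1]
      exact lt_of_lt_of_le hs.2 (le_trans (min_le_left _ _) (by linarith))
    have hδint : 0 < ∫ s in (0:ℝ)..δ, s ^ 2 * g (y s) := by
      apply intervalIntegral.intervalIntegral_pos_of_pos_on (hint 0 δ)
        (fun s hs => mul_pos (pow_pos hs.1 2) (hgpos _ (hypos s hs))) hδ0
    have hmδ : 0 < m δ := by
      rw [hm δ]
      positivity
    exact lt_of_lt_of_le hmδ (hmono δ R hδ0.le hδR)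
  refine ⟨key, ?_, ?_⟩
  · intro r hr
    have := key R r hR hr hmR
    rwa [hyR] at this
  · intro r hr
    rcases eq_or_lt_of_le hr with h | h
    · rw [← h, hyR]; exact hg0 0 le_rfl
    · have : y r < 0 := by
        have := key R r hR h hmR
        rwa [hyR] at this
      exact hg0 _ this.le
end

section
/- Let H be a Hilbert space and L, L₀ : H → H* bounded self-dual operators with ‖L − L₀‖ small, where L₀ has trivial kernel and finite negative Morse index n⁻(L₀), and both operators decompose H = X₋ ⊕ ker ⊕ X₊ with L negative definite on X₋ and uniformly positive on X₊. Then n⁻(L) = n⁻(L₀) for ‖L − L₀‖ sufficiently small. -/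
open RealInnerProductSpace

variable {H : Type*} [NormedAddCommGroup H] [InnerProductSpace ℝ H]

/-- The set of dimensions of subspaces of `W` on which the quadratic form of `L` is
negative definite. -/
def negSet (L : H →L[ℝ] H) (W : Submodule ℝ H) : Set ℕ :=
  {n : ℕ | ∃ V : Submodule ℝ H, V ≤ W ∧ (∀ u ∈ V, u ≠ 0 → ⟪L u, u⟫ < (0:ℝ)) ∧
    Module.finrank ℝ V = n}

/-- Negative Morse index of `L` restricted to `W`. -/
noncomputable def negIdxOn (L : H →L[ℝ] H) (W : Submodule ℝ H) : ℕ :=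
  sSup (negSet L W)

/-- Property (G3): H decomposes as X₋ ⊕ ker L ⊕ X₊ with dim X₋ < ∞, L negative definite
on X₋ and uniformly positive on X₊. -/
def propG3 (L : H →L[ℝ] H) : Prop :=
  ∃ Xm Xp : Submodule ℝ H, ∃ δ : ℝ, 0 < δ ∧
    FiniteDimensional ℝ Xm ∧
    (∀ u ∈ Xm, u ≠ 0 → ⟪L u, u⟫ < (0:ℝ)) ∧
    (∀ u ∈ Xp, δ * ‖u‖ ^ 2 ≤ ⟪L u, u⟫) ∧
    Xm ⊔ (LinearMap.ker (L : H →ₗ[ℝ] H) ⊔ Xp) = ⊤ ∧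
    (∀ u ∈ Xm, ∀ v ∈ LinearMap.ker (L : H →ₗ[ℝ] H), ∀ x ∈ Xp,
      u + v + x = 0 → u = 0 ∧ v = 0 ∧ x = 0)

/-!
If `L` is negative definite on a finite-dimensional `X₋` and nonnegative on some `W` with
`X₋ ⊔ W = ⊤`, then `n⁻(L) = dim X₋`: a negative subspace meets `W` trivially, so it injects into
`H ⧸ W`, which is a quotient of `X₋`. For the nondegenerate `L₀`, (G3) gives such a pair `X₋, X₊`
with `⟪L₀ u, u⟫ ≥ δ ‖u‖²` on `X₊` and, by compactness of the unit sphere of `X₋`,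
`⟪L₀ u, u⟫ ≤ -c ‖u‖²` on `X₋`. Both bounds survive a perturbation of norm `< min c δ`, so the same
pair computes `n⁻(L)`.
-/

open Module

theorem Submodule.finrank_le_of_disjoint_of_sup_eq_top {K E : Type*} [DivisionRing K]
    [AddCommGroup E] [Module K E] {M W V : Submodule K E} [FiniteDimensional K M]
    (hVW : Disjoint V W) (hWM : W ⊔ M = ⊤) : finrank K V ≤ finrank K M := by
  have hsurj : Function.Surjective (W.mkQ.domRestrict M) := by
    rw [← LinearMap.range_eq_top, LinearMap.range_domRestrict, Submodule.map_mkQ_eq_top, hWM]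
  have : FiniteDimensional K (E ⧸ W) := Module.Finite.of_surjective _ hsurj
  calc finrank K V ≤ finrank K (E ⧸ W) :=
        LinearMap.finrank_le_finrank_of_injective (f := W.mkQ.domRestrict V)
          (by rwa [LinearMap.injective_domRestrict_iff, Submodule.ker_mkQ])
    _ ≤ finrank K M := LinearMap.finrank_le_finrank_of_surjective hsurj

theorem Submodule.disjoint_of_neg_of_nonneg {R E : Type*} [Semiring R] [AddCommMonoid E]
    [Module R E] {V W : Submodule R E} (q : E → ℝ) (hV : ∀ u ∈ V, u ≠ 0 → q u < 0)
    (hW : ∀ w ∈ W, 0 ≤ q w) : Disjoint V W :=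
  Submodule.disjoint_def.2 fun u huV huW => not_not.1 fun hu => (hV u huV hu).not_ge (hW u huW)

theorem negIdxOn_top_eq_finrank (L : H →L[ℝ] H) {Xm W : Submodule ℝ H}
    [FiniteDimensional ℝ Xm] (hneg : ∀ u ∈ Xm, u ≠ 0 → ⟪L u, u⟫ < (0:ℝ))
    (hW : ∀ w ∈ W, (0:ℝ) ≤ ⟪L w, w⟫) (hsup : Xm ⊔ W = ⊤) :
    negIdxOn L ⊤ = finrank ℝ Xm := by
  have hmem : finrank ℝ Xm ∈ negSet L ⊤ := ⟨Xm, le_top, hneg, rfl⟩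
  have hbound : ∀ n ∈ negSet L ⊤, n ≤ finrank ℝ Xm := by
    rintro n ⟨V, -, hV, rfl⟩
    exact Submodule.finrank_le_of_disjoint_of_sup_eq_top
      (Submodule.disjoint_of_neg_of_nonneg (fun u => ⟪L u, u⟫) hV hW) (sup_comm Xm W ▸ hsup)
  exact le_antisymm (csSup_le ⟨_, hmem⟩ hbound) (le_csSup ⟨_, hbound⟩ hmem)

theorem exists_pos_inner_apply_self_le_neg_mul_sq (L : H →L[ℝ] H) (V : Submodule ℝ H)
    [FiniteDimensional ℝ V] (hneg : ∀ u ∈ V, u ≠ 0 → ⟪L u, u⟫ < (0:ℝ)) :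
    ∃ c > 0, ∀ u ∈ V, ⟪L u, u⟫ ≤ -c * ‖u‖ ^ 2 := by
  have hcont : Continuous fun u : V => -⟪L u, u⟫ :=
    (Continuous.inner (L.continuous.comp continuous_subtype_val) continuous_subtype_val).neg
  obtain ⟨c, hc, hsphere⟩ := (isCompact_sphere (0 : V) 1).exists_forall_le' hcont.continuousOn
    (a := 0) fun u hu => neg_pos.2 <| hneg u u.2 <| by
      rintro h
      simp [h] at hu
  refine ⟨c, hc, fun u hu => ?_⟩
  rcases eq_or_ne u 0 with rfl | hu0
  · simp
  have hunit : (⟨‖u‖⁻¹ • u, V.smul_mem _ hu⟩ : V) ∈ Metric.sphere 0 1 := by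
    simp [norm_smul, hu0]
  have hscale := hsphere _ hunit
  simp only [map_smul, real_inner_smul_left, real_inner_smul_right] at hscale
  have hnorm : 0 < ‖u‖ ^ 2 := by positivity
  field_simp at hscale
  linarith

theorem inner_apply_self_le_add_norm_sub_mul_sq (L L₀ : H →L[ℝ] H) (u : H) :
    ⟪L u, u⟫ ≤ ⟪L₀ u, u⟫ + ‖L - L₀‖ * ‖u‖ ^ 2 :=
  calc ⟪L u, u⟫ = ⟪L₀ u, u⟫ + ⟪(L - L₀) u, u⟫ := by
        rw [sub_apply, inner_sub_left]; ring
    _ ≤ ⟪L₀ u, u⟫ + ‖(L - L₀) u‖ * ‖u‖ := by gcongr; exact real_inner_le_norm _ _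
    _ ≤ ⟪L₀ u, u⟫ + ‖L - L₀‖ * ‖u‖ * ‖u‖ := by gcongr; exact (L - L₀).le_opNorm u
    _ = ⟪L₀ u, u⟫ + ‖L - L₀‖ * ‖u‖ ^ 2 := by ring

theorem stmt_8_general (L₀ : H →L[ℝ] H)
    (hG3₀ : propG3 L₀)
    (hker₀ : LinearMap.ker (L₀ : H →ₗ[ℝ] H) = ⊥) :
    ∃ ε > 0, ∀ L : H →L[ℝ] H,
      (∀ u v, ⟪L u, v⟫ = ⟪u, L v⟫) → propG3 L → ‖L - L₀‖ < ε →
      negIdxOn L ⊤ = negIdxOn L₀ ⊤ := by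
  obtain ⟨Xm, Xp, δ, hδ, hfin, hneg, hpos, hsup, -⟩ := hG3₀
  have hXmXp : Xm ⊔ Xp = ⊤ := by rwa [hker₀, bot_sup_eq] at hsup
  obtain ⟨c, hc, hc_neg⟩ := exists_pos_inner_apply_self_le_neg_mul_sq L₀ Xm hneg
  have hidx₀ : negIdxOn L₀ ⊤ = finrank ℝ Xm :=
    negIdxOn_top_eq_finrank L₀ hneg (fun v hv => (hpos v hv).trans' (by positivity)) hXmXp
  refine ⟨min c δ, lt_min hc hδ, fun L _ _ hL => hidx₀ ▸ negIdxOn_top_eq_finrank L ?_ ?_ hXmXp⟩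
  · intro u hu hu0
    have hup := inner_apply_self_le_add_norm_sub_mul_sq L L₀ u
    have : 0 < ‖u‖ ^ 2 := by positivity
    nlinarith [hc_neg u hu, min_le_left c δ]
  · intro v hv
    have hlow := inner_apply_self_le_add_norm_sub_mul_sq L₀ L v
    rw [norm_sub_rev] at hlow
    nlinarith [hpos v hv, min_le_right c δ, sq_nonneg ‖v‖]

/-- Stability of the negative Morse index under small self-dual perturbations of a
nondegenerate operator satisfying (G3). -/
theorem stmt_8 [CompleteSpace H] (L₀ : H →L[ℝ] H)
    (hsym₀ : ∀ u v, ⟪L₀ u, v⟫ = ⟪u, L₀ v⟫)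
    (hG3₀ : propG3 L₀)
    (hker₀ : LinearMap.ker (L₀ : H →ₗ[ℝ] H) = ⊥) :
    ∃ ε > 0, ∀ L : H →L[ℝ] H,
      (∀ u v, ⟪L u, v⟫ = ⟪u, L v⟫) → propG3 L → ‖L - L₀‖ < ε →
      negIdxOn L ⊤ = negIdxOn L₀ ⊤ :=
  stmt_8_general L₀ hG3₀ hker₀
end

section
/- Let X be a Hilbert space, L : X → X* bounded self-dual, and suppose there exists a vector w ∈ X with ⟨Lw, w⟩ < 0 and a closed hyperplane X̄ = {ρ ∈ X : ⟨Lw, ρ⟩ = 0}. Then X = X̄ ⊕ span{w} and n⁻(L) = n⁻(L|_{X̄}) + 1. -/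
open RealInnerProductSpace

variable {H : Type*} [NormedAddCommGroup H] [InnerProductSpace ℝ H]

/-
Let `f = ⟪L w, ·⟫`. Since `f w = ⟪L w, w⟫ ≠ 0`, the hyperplane `ker f` is complementary
to `ℝ ∙ w`. Self-duality makes every `v ∈ ker f` `L`-orthogonal to `w`, so
`⟪L (v + c • w), v + c • w⟫ = ⟪L v, v⟫ + c² ⟪L w, w⟫`, and a negative definite `V ≤ ker f`
extends to the negative definite `V ⊕ ℝ ∙ w`; hence `n⁻(L) ≥ n⁻(L|ker f) + 1`. Conversely,
a negative definite `V` meets `ker f` in codimension at most one, which gives `≤`.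
-/

open LinearMap in
theorem LinearMap.isCompl_ker_span_singleton {K V : Type*} [Field K] [AddCommGroup V] [Module K V]
    (f : V →ₗ[K] K) {x : V} (hx : f x ≠ 0) : IsCompl (ker f) (K ∙ x) :=
  ⟨Submodule.disjoint_span_singleton.2 fun hxf => absurd hxf hx,
    codisjoint_iff.2 <| sup_comm (ker f) _ ▸ f.span_singleton_sup_ker_eq_top hx⟩

open LinearMap in
theorem Submodule.finrank_le_finrank_inf_ker_add_one {K V : Type*} [Field K] [AddCommGroup V]
    [Module K V] (U : Submodule K V) [FiniteDimensional K U] (f : V →ₗ[K] K) :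
    Module.finrank K U ≤ Module.finrank K ↥(U ⊓ ker f) + 1 := by
  have hker : Module.finrank K ↥(U ⊓ ker f) = Module.finrank K (ker (f.domRestrict U)) := by
    rw [ker_domRestrict, ← Submodule.map_comap_subtype, Submodule.finrank_map_subtype_eq]
  have hrange : Module.finrank K (range (f.domRestrict U)) ≤ 1 := by
    simpa using Submodule.finrank_le (range (f.domRestrict U))
  have := (f.domRestrict U).finrank_range_add_finrank_ker
  omega

section NegativeIndex

variable (L : H →L[ℝ] H)

def IsNegDefOn (V : Submodule ℝ H) : Prop :=
  ∀ u ∈ V, u ≠ 0 → ⟪L u, u⟫ < (0:ℝ)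

variable {L}

theorem isNegDefOn_bot : IsNegDefOn L ⊥ :=
  fun _ hu hu0 => absurd ((Submodule.mem_bot ℝ).mp hu) hu0

theorem IsNegDefOn.mono {V V' : Submodule ℝ H} (hV : IsNegDefOn L V) (h : V' ≤ V) :
    IsNegDefOn L V' :=
  fun u hu => hV u (h hu)

theorem IsNegDefOn.inner_nonpos {V : Submodule ℝ H} (hV : IsNegDefOn L V) {u : H} (hu : u ∈ V) :
    ⟪L u, u⟫ ≤ (0:ℝ) := by
  rcases eq_or_ne u 0 with rfl | hu0
  · simp
  · exact (hV u hu hu0).le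

theorem inner_map_add_smul_self (hsym : ∀ u v, ⟪L u, v⟫ = ⟪u, L v⟫) {v w : H}
    (hv : ⟪L w, v⟫ = (0:ℝ)) (c : ℝ) :
    ⟪L (v + c • w), v + c • w⟫ = ⟪L v, v⟫ + c ^ 2 * ⟪L w, w⟫ := by
  have hv' : ⟪L v, w⟫ = (0:ℝ) := by rw [hsym, real_inner_comm, hv]
  simp only [map_add, map_smul, inner_add_left, inner_add_right, real_inner_smul_left,
    real_inner_smul_right, hv, hv']
  ring

theorem IsNegDefOn.sup_span_singleton (hsym : ∀ u v, ⟪L u, v⟫ = ⟪u, L v⟫)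
    {V : Submodule ℝ H} (hV : IsNegDefOn L V) {w : H} (hw : ⟪L w, w⟫ < (0:ℝ))
    (hVw : V ≤ LinearMap.ker (innerₛₗ ℝ (L w))) :
    IsNegDefOn L (V ⊔ ℝ ∙ w) := by
  intro u hu hu0
  obtain ⟨v, hv, _, hz, rfl⟩ := Submodule.mem_sup.mp hu
  obtain ⟨c, rfl⟩ := Submodule.mem_span_singleton.mp hz
  rw [inner_map_add_smul_self hsym (hVw hv) c]
  rcases eq_or_ne c 0 with rfl | hc
  · simpa using hV v hv (by simpa using hu0)
  · nlinarith [hV.inner_nonpos hv, sq_pos_of_ne_zero hc]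

-- `negSet` also counts infinite-dimensional `V`, with junk `finrank` 0; these are replaced by `⊥`.
theorem exists_finiteDimensional_of_mem_negSet {W : Submodule ℝ H} {n : ℕ}
    (hn : n ∈ negSet L W) : ∃ V ≤ W, FiniteDimensional ℝ V ∧ IsNegDefOn L V ∧
      Module.finrank ℝ V = n := by
  obtain ⟨V, hVW, hV, rfl⟩ := hn
  by_cases hfin : FiniteDimensional ℝ V
  · exact ⟨V, hVW, hfin, hV, rfl⟩
  · refine ⟨⊥, bot_le, inferInstance, isNegDefOn_bot, ?_⟩
    rw [finrank_bot, Module.finrank_of_not_finite hfin]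

theorem zero_mem_negSet (W : Submodule ℝ H) : 0 ∈ negSet L W :=
  ⟨⊥, bot_le, isNegDefOn_bot, finrank_bot ℝ H⟩

theorem negSet_mono {W W' : Submodule ℝ H} (h : W ≤ W') : negSet L W ⊆ negSet L W' :=
  fun _ ⟨V, hVW, hV, hVn⟩ => ⟨V, hVW.trans h, hV, hVn⟩

theorem succ_mem_negSet_of_mem_negSet_inf_ker (hsym : ∀ u v, ⟪L u, v⟫ = ⟪u, L v⟫) {w : H}
    (hw : ⟪L w, w⟫ < (0:ℝ)) {W : Submodule ℝ H} (hwW : w ∈ W) {n : ℕ}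
    (hn : n ∈ negSet L (W ⊓ LinearMap.ker (innerₛₗ ℝ (L w)))) : n + 1 ∈ negSet L W := by
  obtain ⟨V, hVW, _, hV, rfl⟩ := exists_finiteDimensional_of_mem_negSet hn
  have hVker := hVW.trans inf_le_right
  have hdisj : V ⊓ ℝ ∙ w = ⊥ := disjoint_iff.mp <|
    ((innerₛₗ ℝ (L w)).isCompl_ker_span_singleton hw.ne).disjoint.mono_left hVker
  refine ⟨V ⊔ ℝ ∙ w,
    sup_le (hVW.trans inf_le_left) ((Submodule.span_singleton_le_iff_mem _ _).2 hwW),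
    hV.sup_span_singleton hsym hw hVker, ?_⟩
  have hne : w ≠ 0 := by rintro rfl; simp at hw
  have := Submodule.finrank_sup_add_finrank_inf_eq V (ℝ ∙ w)
  rwa [hdisj, finrank_bot, add_zero, finrank_span_singleton hne] at this

theorem exists_mem_negSet_inf_ker_le_succ (f : H →ₗ[ℝ] ℝ) {W : Submodule ℝ H} {m : ℕ}
    (hm : m ∈ negSet L W) : ∃ k ∈ negSet L (W ⊓ LinearMap.ker f), m ≤ k + 1 := by
  obtain ⟨V, hVW, _, hV, rfl⟩ := exists_finiteDimensional_of_mem_negSet hm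
  exact ⟨_, ⟨V ⊓ LinearMap.ker f, inf_le_inf_right _ hVW, hV.mono inf_le_left, rfl⟩,
    V.finrank_le_finrank_inf_ker_add_one f⟩

theorem negIdxOn_eq_negIdxOn_inf_ker_add_one (hsym : ∀ u v, ⟪L u, v⟫ = ⟪u, L v⟫) {w : H}
    (hw : ⟪L w, w⟫ < (0:ℝ)) {W : Submodule ℝ H} (hwW : w ∈ W)
    (hbdd : BddAbove (negSet L W)) :
    negIdxOn L W = negIdxOn L (W ⊓ LinearMap.ker (innerₛₗ ℝ (L w))) + 1 := by
  set W' := W ⊓ LinearMap.ker (innerₛₗ ℝ (L w))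
  have hbdd' : BddAbove (negSet L W') := hbdd.mono (negSet_mono inf_le_left)
  apply le_antisymm
  · obtain ⟨k, hk, hle⟩ := exists_mem_negSet_inf_ker_le_succ (innerₛₗ ℝ (L w))
      (Nat.sSup_mem ⟨0, zero_mem_negSet W⟩ hbdd)
    exact hle.trans (Nat.succ_le_succ (le_csSup hbdd' hk))
  · exact le_csSup hbdd (succ_mem_negSet_of_mem_negSet_inf_ker hsym hw hwW
      (Nat.sSup_mem ⟨0, zero_mem_negSet W'⟩ hbdd'))

end NegativeIndex

theorem stmt_15_general (L : H →L[ℝ] H)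
    (hsym : ∀ u v, ⟪L u, v⟫ = ⟪u, L v⟫)
    (hfin : BddAbove (negSet L ⊤))
    (w : H) (hw : ⟪L w, w⟫ < (0:ℝ))
    (Xbar : Submodule ℝ H)
    (hXbar : ∀ ρ, ρ ∈ Xbar ↔ ⟪L w, ρ⟫ = (0:ℝ)) :
    IsCompl Xbar (Submodule.span ℝ {w}) ∧
      negIdxOn L ⊤ = negIdxOn L Xbar + 1 := by
  obtain rfl : Xbar = LinearMap.ker (innerₛₗ ℝ (L w)) := by
    ext ρ
    simp [hXbar]
  refine ⟨(innerₛₗ ℝ (L w)).isCompl_ker_span_singleton hw.ne, ?_⟩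
  simpa using negIdxOn_eq_negIdxOn_inf_ker_add_one hsym hw Submodule.mem_top hfin

/-- If ⟪Lw,w⟫ < 0 and X̄ = {ρ : ⟪Lw,ρ⟫ = 0}, then X = X̄ ⊕ span{w} and
n⁻(L) = n⁻(L|_{X̄}) + 1. -/
theorem stmt_15 [CompleteSpace H] (L : H →L[ℝ] H)
    (hsym : ∀ u v, ⟪L u, v⟫ = ⟪u, L v⟫)
    (hfin : BddAbove (negSet L ⊤))
    (w : H) (hw : ⟪L w, w⟫ < (0:ℝ))
    (Xbar : Submodule ℝ H)
    (hXbar : ∀ ρ, ρ ∈ Xbar ↔ ⟪L w, ρ⟫ = (0:ℝ)) :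
    IsCompl Xbar (Submodule.span ℝ {w}) ∧
      negIdxOn L ⊤ = negIdxOn L Xbar + 1 :=
  stmt_15_general L hsym hfin w hw Xbar hXbar
end
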